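/- arXiv:1002.0539 — 3 statements merged into one kernel-verified Lean document; each statement's English description precedes it below -/
import Mathlib

section
/- Let D be a Gauss diagram on the Wilson line containing three pairwise linked arrows i, j, k whose six endpoints, listed in increasing order as q1 < q2 < q3 < q4 < q5 < q6, form three pairs of adjacent endpoints of D: q1 is adjacent to q2, q3 is adjacent to q4, and q5 is adjacent to q6 (the configuration of the third Reidemeister move). Then every arrow x of D with x ∉ {i, j, k} is linked with an even number of the arrows i, j, k; consequently deg_D(i) + deg_D(j) + deg_D(k) is even. (This is the verification of the third-Reidemeister-move axiom (3a) for the Gaussian parity.) -/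
/-!
An arrow `x` other than `i, j, k` is linked with `a` exactly when one endpoint of `a` lies
between the endpoints of `x`, so modulo 2 the number of `a ∈ {i, j, k}` linked with `x` counts
the points `q₁, …, q₆` lying between the endpoints of `x`. The endpoints of `x` cannot separate
two adjacent endpoints, so these points come in pairs and the count is even. Linking being
symmetric, double counting gives `deg i + deg j + deg k = ∑ₓ #{a ∈ {i, j, k} | x linked with a}`;
the terms `x ∉ {i, j, k}` are even by the above and each of `i, j, k` contributes `2`.
-/

noncomputable section

namespace Gauss

attribute [local instance] Classical.propDecidable

/-- An arrow of a Gauss diagram on the Wilson line: a tail point, a head point,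
and a sign. -/
structure Arrow where
  t : ℝ
  h : ℝ
  sgn : ℤ

/-- `p` lies strictly between `a` and `b`. -/
def Between (a b p : ℝ) : Prop := (a < p ∧ p < b) ∨ (b < p ∧ p < a)

/-- Two arrows are linked if they are distinct and exactly one of the two
endpoints of `y` lies strictly between the two endpoints of `x`. -/
def Linked (x y : Arrow) : Prop :=
  x ≠ y ∧ Xor' (Between x.t x.h y.t) (Between x.t x.h y.h)

/-- `delta x y = 1` if the head of `y` lies strictly between the endpoints of `x`,
and `-1` otherwise. -/
def delta (x y : Arrow) : ℤ := if Between x.t x.h y.h then 1 else -1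

/-- The index `I_D(x)` of an arrow `x` in the diagram `D`. -/
def index (D : Finset Arrow) (x : Arrow) : ℤ :=
  ∑ y ∈ D.filter (fun y => Linked x y), delta x y * x.sgn * y.sgn

/-- `p` is an endpoint of the diagram `D`. -/
def IsEndpoint (D : Finset Arrow) (p : ℝ) : Prop :=
  ∃ a ∈ D, p = a.t ∨ p = a.h

/-- A finite set of arrows is a Gauss diagram on the Wilson line if every sign
is `±1` and all endpoints are pairwise distinct. -/
def IsGaussDiagram (D : Finset Arrow) : Prop :=
  (∀ a ∈ D, a.sgn = 1 ∨ a.sgn = -1) ∧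
  (∀ a ∈ D, a.t ≠ a.h) ∧
  (∀ a ∈ D, ∀ b ∈ D, a ≠ b → a.t ≠ b.t ∧ a.t ≠ b.h ∧ a.h ≠ b.t ∧ a.h ≠ b.h)

/-- Two endpoints of `D` are adjacent if no endpoint of `D` lies strictly
between them. -/
def Adjacent (D : Finset Arrow) (p q : ℝ) : Prop :=
  p ≠ q ∧ IsEndpoint D p ∧ IsEndpoint D q ∧ ∀ r, IsEndpoint D r → ¬ Between p q r

/-- The degree of an arrow in the intersection graph of `D`: the number of
arrows linked with it. -/
def degree (D : Finset Arrow) (x : Arrow) : ℕ :=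
  (D.filter (fun y => Linked x y)).card

/-- A pair of arrows is heads-in if the head of each lies strictly between the
endpoints of the other. -/
def HeadsIn (x y : Arrow) : Prop :=
  Between x.t x.h y.h ∧ Between y.t y.h x.h

/-- A pair of arrows is heads-out if the head of neither lies strictly between
the endpoints of the other. -/
def HeadsOut (x y : Arrow) : Prop :=
  ¬ Between x.t x.h y.h ∧ ¬ Between y.t y.h x.h

/-- The order-two invariant counting heads-out linked pairs, weighted by signs.
Each unordered pair is counted once, via the ordering of the tails. -/
def v21 (D : Finset Arrow) : ℤ :=
  ∑ p ∈ (D ×ˢ D).filter (fun p => p.1.t < p.2.t ∧ Linked p.1 p.2 ∧ HeadsOut p.1 p.2),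
    p.1.sgn * p.2.sgn

/-- The order-two invariant counting heads-in linked pairs, weighted by signs.
Each unordered pair is counted once, via the ordering of the tails. -/
def v22 (D : Finset Arrow) : ℤ :=
  ∑ p ∈ (D ×ˢ D).filter (fun p => p.1.t < p.2.t ∧ Linked p.1 p.2 ∧ HeadsIn p.1 p.2),
    p.1.sgn * p.2.sgn

def endpoints (a : Arrow) : Finset ℝ := {a.t, a.h}

def inside (x : Arrow) (r : ℝ) : ZMod 2 := if Between x.t x.h r then 1 else 0

lemma between_iff_xor {a b p : ℝ} (ha : p ≠ a) (hb : p ≠ b) :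
    Between a b p ↔ Xor (a < p) (b < p) := by
  unfold Between Xor
  constructor
  · rintro (⟨h1, h2⟩ | ⟨h1, h2⟩)
    · exact Or.inl ⟨h1, h2.not_gt⟩
    · exact Or.inr ⟨h1, h2.not_gt⟩
  · rintro (⟨h1, h2⟩ | ⟨h1, h2⟩)
    · exact Or.inl ⟨h1, lt_of_le_of_ne (not_lt.mp h2) hb⟩
    · exact Or.inr ⟨h1, lt_of_le_of_ne (not_lt.mp h2) ha⟩

lemma between_iff_between_of_notMem_Icc {a b p q : ℝ} (ha : a ∉ Set.Icc p q)
    (hb : b ∉ Set.Icc p q) (hpq : p ≤ q) : Between a b p ↔ Between a b q := by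
  have lt_iff (c : ℝ) (hc : c ∉ Set.Icc p q) : c < p ↔ c < q := by
    simp only [Set.mem_Icc, not_and, not_le] at hc
    constructor
    · intro h; linarith
    · intro h; by_contra h'; exact (hc (not_lt.mp h')).not_gt h
  have hne (c r : ℝ) (hc : c ∉ Set.Icc p q) (hr : r ∈ Set.Icc p q) : r ≠ c :=
    fun h => hc (h ▸ hr)
  have hp : p ∈ Set.Icc p q := Set.left_mem_Icc.mpr hpq
  have hq : q ∈ Set.Icc p q := Set.right_mem_Icc.mpr hpq
  rw [between_iff_xor (hne a p ha hp) (hne b p hb hp), between_iff_xor (hne a q ha hq)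
    (hne b q hb hq), lt_iff a ha, lt_iff b hb]

lemma linked_iff {x y : Arrow} :
    Linked x y ↔ x ≠ y ∧ Xor (Between x.t x.h y.t) (Between x.t x.h y.h) := Iff.rfl

lemma linked_iff_xor {x y : Arrow} (ht : y.t ≠ x.t ∧ y.t ≠ x.h) (hh : y.h ≠ x.t ∧ y.h ≠ x.h) :
    Linked x y ↔ x ≠ y ∧ Xor (Xor (x.t < y.t) (x.h < y.t)) (Xor (x.t < y.h) (x.h < y.h)) := by
  rw [linked_iff, between_iff_xor ht.1 ht.2, between_iff_xor hh.1 hh.2]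

lemma ite_linked_eq_sum_inside {x a : Arrow} (hxa : x ≠ a) (ha : a.t ≠ a.h) :
    (if Linked x a then 1 else 0 : ZMod 2) = ∑ r ∈ endpoints a, inside x r := by
  rw [endpoints, Finset.sum_pair ha, inside, inside]
  by_cases ht : Between x.t x.h a.t <;> by_cases hh : Between x.t x.h a.h <;>
    simp [linked_iff, hxa, ht, hh, CharTwo.add_self_eq_zero]

lemma card_filter_linked_eq_card_sub_one {A : Finset Arrow}
    (hA : ∀ a ∈ A, ∀ b ∈ A, a ≠ b → Linked a b) {x : Arrow} (hx : x ∈ A) :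
    (A.filter (Linked x)).card = A.card - 1 := by
  rw [← Finset.card_erase_of_mem hx]
  congr 1
  ext a
  simp only [Finset.mem_filter, Finset.mem_erase]
  exact ⟨fun ⟨ha, hxa⟩ => ⟨fun h => hxa.1 h.symm, ha⟩,
    fun ⟨hax, ha⟩ => ⟨ha, hA x hx a ha (Ne.symm hax)⟩⟩

namespace Adjacent

variable {D : Finset Arrow} {p q : ℝ}

lemma notMem_Icc (h : Adjacent D p q) {r : ℝ} (hr : IsEndpoint D r) (hrp : r ≠ p)
    (hrq : r ≠ q) : r ∉ Set.Icc p q :=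
  fun ⟨hpr, hrq'⟩ => h.2.2.2 r hr (Or.inl ⟨lt_of_le_of_ne hpr hrp.symm, lt_of_le_of_ne hrq' hrq⟩)

lemma inside_eq (h : Adjacent D p q) (hpq : p ≤ q) {x : Arrow} (hx : x ∈ D)
    (hp : p ∉ endpoints x) (hq : q ∉ endpoints x) : inside x p = inside x q := by
  simp only [endpoints, Finset.mem_insert, Finset.mem_singleton, not_or] at hp hq
  have ht := h.notMem_Icc ⟨x, hx, Or.inl rfl⟩ (Ne.symm hp.1) (Ne.symm hq.1)
  have hh := h.notMem_Icc ⟨x, hx, Or.inr rfl⟩ (Ne.symm hp.2) (Ne.symm hq.2)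
  simp only [inside, between_iff_between_of_notMem_Icc ht hh hpq]

end Adjacent

namespace IsGaussDiagram

variable {D : Finset Arrow} {a b : Arrow}

lemma t_ne_h (hD : IsGaussDiagram D) (ha : a ∈ D) : a.t ≠ a.h := hD.2.1 a ha

lemma disjoint_endpoints (hD : IsGaussDiagram D) (ha : a ∈ D) (hb : b ∈ D) (hab : a ≠ b) :
    Disjoint (endpoints a) (endpoints b) := by
  obtain ⟨h1, h2, h3, h4⟩ := hD.2.2 a ha b hb hab
  simp [endpoints, h1.symm, h2.symm, h3.symm, h4.symm]

-- Each of the four comparisons between an endpoint of `a` and one of `b` flips when the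
-- roles are swapped, which leaves their total parity unchanged.
lemma linked_comm (hD : IsGaussDiagram D) (ha : a ∈ D) (hb : b ∈ D) :
    Linked a b ↔ Linked b a := by
  by_cases hab : a = b
  · rw [hab]
  obtain ⟨h1, h2, h3, h4⟩ := hD.2.2 a ha b hb hab
  have flip {u v : ℝ} (huv : u ≠ v) : v < u ↔ ¬ u < v := by rw [not_lt, huv.symm.le_iff_lt]
  rw [linked_iff_xor ⟨h1.symm, h3.symm⟩ ⟨h2.symm, h4.symm⟩, linked_iff_xor ⟨h1, h2⟩ ⟨h3, h4⟩,
    flip h1, flip h2, flip h3, flip h4, xor_not_not, xor_not_not, ne_comm]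
  simp only [Xor]
  tauto

lemma card_filter_linked_cast (hD : IsGaussDiagram D) {A : Finset Arrow} (hAD : A ⊆ D)
    {x : Arrow} (hxA : x ∉ A) :
    ((A.filter (Linked x)).card : ZMod 2) = ∑ r ∈ A.biUnion endpoints, inside x r := by
  rw [Finset.sum_biUnion fun a ha b hb hab => hD.disjoint_endpoints (hAD ha) (hAD hb) hab,
    Finset.card_filter, Nat.cast_sum]
  refine Finset.sum_congr rfl fun a ha => ?_
  rw [← ite_linked_eq_sum_inside (ne_of_mem_of_not_mem ha hxA).symm (hD.t_ne_h (hAD ha))]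
  push_cast
  rfl

theorem even_card_filter_linked (hD : IsGaussDiagram D) {A : Finset Arrow} (hAD : A ⊆ D)
    {x : Arrow} (hx : x ∈ D) (hxA : x ∉ A) {q1 q2 q3 q4 q5 q6 : ℝ}
    (hq12 : q1 < q2) (hq23 : q2 < q3) (hq34 : q3 < q4) (hq45 : q4 < q5) (hq56 : q5 < q6)
    (hA : A.biUnion endpoints = {q1, q2, q3, q4, q5, q6})
    (h12 : Adjacent D q1 q2) (h34 : Adjacent D q3 q4) (h56 : Adjacent D q5 q6) :
    Even (A.filter (Linked x)).card := by
  have notMem_endpoints {q : ℝ} (hq : q ∈ ({q1, q2, q3, q4, q5, q6} : Finset ℝ)) :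
      q ∉ endpoints x := by
    obtain ⟨a, ha, hqa⟩ := Finset.mem_biUnion.mp (hA ▸ hq)
    exact Finset.disjoint_left.mp
      (hD.disjoint_endpoints (hAD ha) hx (ne_of_mem_of_not_mem ha hxA)) hqa
  have inside_eq {p q : ℝ} (h : Adjacent D p q) (hpq : p < q)
      (hp : p ∈ ({q1, q2, q3, q4, q5, q6} : Finset ℝ))
      (hq : q ∈ ({q1, q2, q3, q4, q5, q6} : Finset ℝ)) : inside x p = inside x q :=
    h.inside_eq hpq.le hx (notMem_endpoints hp) (notMem_endpoints hq)
  rw [← ZMod.natCast_eq_zero_iff_even, hD.card_filter_linked_cast hAD hxA, hA,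
    Finset.sum_insert (by simp; grind), Finset.sum_insert (by simp; grind),
    Finset.sum_insert (by simp; grind), Finset.sum_insert (by simp; grind),
    Finset.sum_pair hq56.ne, inside_eq h12 hq12 (by simp) (by simp),
    inside_eq h34 hq34 (by simp) (by simp), inside_eq h56 hq56 (by simp) (by simp)]
  grind

lemma even_card_filter_linked_of_triangle (hD : IsGaussDiagram D) {i j k : Arrow}
    (hi : i ∈ D) (hj : j ∈ D) (hk : k ∈ D) (hij : Linked i j) (hik : Linked i k)
    (hjk : Linked j k) {x : Arrow} (hx : x ∈ ({i, j, k} : Finset Arrow)) :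
    Even (({i, j, k} : Finset Arrow).filter (Linked x)).card := by
  have htriangle : ∀ a ∈ ({i, j, k} : Finset Arrow), ∀ b ∈ ({i, j, k} : Finset Arrow),
      a ≠ b → Linked a b := by
    have hji := (hD.linked_comm hi hj).mp hij
    have hki := (hD.linked_comm hi hk).mp hik
    have hkj := (hD.linked_comm hj hk).mp hjk
    simp only [Finset.mem_insert, Finset.mem_singleton]
    rintro a (rfl | rfl | rfl) b (rfl | rfl | rfl) hab <;> first | exact absurd rfl hab | assumption
  rw [card_filter_linked_eq_card_sub_one htriangle hx,
    Finset.card_eq_three.mpr ⟨i, j, k, hij.1, hik.1, hjk.1, rfl⟩]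
  decide

lemma even_sum_degree (hD : IsGaussDiagram D) {A : Finset Arrow} (hAD : A ⊆ D)
    (hA : ∀ x ∈ D, Even (A.filter (Linked x)).card) : Even (∑ a ∈ A, degree D a) := by
  have double_count : ∑ a ∈ A, degree D a = ∑ x ∈ D, (A.bipartiteAbove Linked x).card := by
    rw [Finset.sum_card_bipartiteAbove_eq_sum_card_bipartiteBelow]
    refine Finset.sum_congr rfl fun a ha => congrArg Finset.card ?_
    exact Finset.filter_congr fun y hy => hD.linked_comm (hAD ha) hy
  rw [double_count]
  exact Finset.even_sum _ hA

end IsGaussDiagram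

/-- in the configuration of the third Reidemeister move, every
other arrow is linked with an even number of the three arrows `i, j, k`;
consequently the sum of their degrees is even. -/
theorem stmt4 (D : Finset Arrow) (hD : IsGaussDiagram D) (i j k : Arrow)
    (hi : i ∈ D) (hj : j ∈ D) (hk : k ∈ D)
    (hij : Linked i j) (hik : Linked i k) (hjk : Linked j k)
    (q1 q2 q3 q4 q5 q6 : ℝ)
    (hq12 : q1 < q2) (hq23 : q2 < q3) (hq34 : q3 < q4) (hq45 : q4 < q5)
    (hq56 : q5 < q6)
    (hset : ({q1, q2, q3, q4, q5, q6} : Set ℝ) = {i.t, i.h, j.t, j.h, k.t, k.h})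
    (h12 : Adjacent D q1 q2) (h34 : Adjacent D q3 q4) (h56 : Adjacent D q5 q6) :
    (∀ x ∈ D, x ≠ i → x ≠ j → x ≠ k →
      Even ( (({i, j, k} : Finset Arrow).filter (fun a => Linked x a)).card )) ∧
    Even (degree D i + degree D j + degree D k) := by
  have hijkD : ({i, j, k} : Finset Arrow) ⊆ D := by simp [Finset.insert_subset_iff, hi, hj, hk]
  have hendpoints : ({i, j, k} : Finset Arrow).biUnion endpoints = {q1, q2, q3, q4, q5, q6} := by
    ext r
    have hr := Set.ext_iff.mp hset r
    simp only [Set.mem_insert_iff, Set.mem_singleton_iff] at hr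
    simp only [Finset.mem_biUnion, endpoints, Finset.mem_insert, Finset.mem_singleton, hr]
    aesop
  have hother (x : Arrow) (hx : x ∈ D) (hxi : x ≠ i) (hxj : x ≠ j) (hxk : x ≠ k) :
      Even (({i, j, k} : Finset Arrow).filter (Linked x)).card :=
    hD.even_card_filter_linked hijkD hx (by simp [hxi, hxj, hxk]) hq12 hq23 hq34 hq45 hq56
      hendpoints h12 h34 h56
  refine ⟨hother, ?_⟩
  have hsum : degree D i + degree D j + degree D k = ∑ a ∈ {i, j, k}, degree D a := by
    rw [Finset.sum_insert (by simp [hij.1, hik.1]), Finset.sum_pair hjk.1, add_assoc]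
  rw [hsum]
  refine hD.even_sum_degree hijkD fun x hx => ?_
  by_cases hx' : x ∈ ({i, j, k} : Finset Arrow)
  · exact hD.even_card_filter_linked_of_triangle hi hj hk hij hik hjk hx'
  · simp only [Finset.mem_insert, Finset.mem_singleton, not_or] at hx'
    exact hother x hx hx'.1 hx'.2.1 hx'.2.2

end Gauss
end
end

section
/- Let D be a Gauss diagram on the Wilson line with zero index, let e be its smallest endpoint, belonging to the arrow z, and let 1·D be the rotated diagram obtained from D by replacing the endpoint e of z by a real number larger than all endpoints of D, keeping its role as head or tail of z and keeping all signs and all other endpoints unchanged. Then v21(1·D) = v21(D) and v22(1·D) = v22(D). -/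
noncomputable section

namespace Gauss

attribute [local instance] Classical.propDecidable

/-! Write `D = insert z E` and let `c` be the other endpoint of `z`. Both `z` and its rotation
`z'` have one endpoint outside the span of every arrow of `E` and the other one at `c`, so the
arrows of `E` linked with `z`, and those linked with `z'`, are exactly the arrows crossing `c`.
If the tail of `z` is at `e`, neither `z` nor `z'` is in a heads-out pair, and `z` (resp. `z'`)
forms a heads-in pair with a crossing arrow exactly when the head of that arrow lies below
(resp. above) `c`. If the head of `z` is at `e`, the same holds with heads-in and heads-out
exchanged and with below and above exchanged. Either way each invariant changes by `±σ(z)` times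
the difference of the signed counts of crossing arrows with head below and with head above `c`,
and since `δ(z, y) = 1` exactly for the heads below `c`, `σ(z)` times this difference is the
index of `z`, which is zero. -/

def Outside (p : ℝ) (y : Arrow) : Prop := p < y.t ∧ p < y.h ∨ y.t < p ∧ y.h < p

lemma between_comm {a b p : ℝ} : Between a b p ↔ Between b a p := or_comm

lemma not_between_of_outside {y : Arrow} {p : ℝ} (hp : Outside p y) : ¬ Between y.t y.h p := by
  unfold Outside Between at *; grind

lemma xor_between_iff_between {p c u v : ℝ} (hp : p < u ∧ p < v ∨ u < p ∧ v < p)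
    (hu : u ≠ c) (hv : v ≠ c) :
    Xor (Between p c u) (Between p c v) ↔ Between u v c := by
  unfold Between
  rcases hu.lt_or_gt with hu | hu <;> rcases hv.lt_or_gt with hv | hv <;> grind

lemma not_between_iff_between_of_mem_Ioo {e M c q : ℝ} (hq : q ∈ Set.Ioo e M) (hqc : q ≠ c) :
    ¬ Between e c q ↔ Between M c q := by
  obtain ⟨heq, hqM⟩ := hq
  unfold Between
  rcases hqc.lt_or_gt with hqc | hqc <;> grind

lemma ne_of_not_isEndpoint {E : Finset Arrow} {y : Arrow} {c : ℝ} (hc : ¬ IsEndpoint E c)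
    (hy : y ∈ E) : y.t ≠ c ∧ y.h ≠ c :=
  ⟨fun h => hc ⟨y, hy, Or.inl h.symm⟩, fun h => hc ⟨y, hy, Or.inr h.symm⟩⟩

def crossingSum (E : Finset Arrow) (c : ℝ) (P : ℝ → Prop) : ℤ :=
  ∑ y ∈ E with Between y.t y.h c ∧ P y.h, y.sgn

lemma crossingSum_congr {E : Finset Arrow} {c : ℝ} {P Q : ℝ → Prop}
    (h : ∀ y ∈ E, P y.h ↔ Q y.h) : crossingSum E c P = crossingSum E c Q := by
  unfold crossingSum
  rw [Finset.filter_congr fun y hy => and_congr_right_iff.mpr fun _ => h y hy]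

section Anchored

variable {E : Finset Arrow} {a y : Arrow} {p c : ℝ} {σ : ℤ}

lemma between_eq_of_endpoints (ha : a.t = p ∧ a.h = c ∨ a.t = c ∧ a.h = p) :
    Between a.t a.h = Between p c := by
  rcases ha with ⟨ht, hh⟩ | ⟨ht, hh⟩
  · rw [ht, hh]
  · ext q; rw [ht, hh, between_comm]

lemma linked_iff_between_of_outside (ha : a.t = p ∧ a.h = c ∨ a.t = c ∧ a.h = p)
    (hp : Outside p y) (hc : y.t ≠ c ∧ y.h ≠ c) :
    Linked a y ↔ Between y.t y.h c := by
  have hay : a ≠ y := by rintro rfl; unfold Outside at hp; grind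
  rw [linked_iff, between_eq_of_endpoints ha, xor_between_iff_between hp hc.1 hc.2]
  exact and_iff_right hay

lemma linked_iff_between_of_outside' (ha : a.t = p ∧ a.h = c ∨ a.t = c ∧ a.h = p)
    (hp : Outside p y) : Linked y a ↔ Between y.t y.h c := by
  have hya : y ≠ a := by rintro rfl; unfold Outside at hp; grind
  have hnp := not_between_of_outside hp
  rcases ha with ⟨ht, hh⟩ | ⟨ht, hh⟩ <;> rw [linked_iff, ht, hh] <;> grind

lemma sum_tail_lt_insert {R : Arrow → Arrow → Prop} [DecidableRel R] (ha : a ∉ E)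
    (ht : ∀ y ∈ E, y.t ≠ a.t) (hR : ∀ y ∈ E, R y a ↔ R a y) :
    ∑ q ∈ (insert a E ×ˢ insert a E) with q.1.t < q.2.t ∧ R q.1 q.2, q.1.sgn * q.2.sgn =
      ∑ y ∈ E with R a y, a.sgn * y.sgn +
        ∑ q ∈ E ×ˢ E with q.1.t < q.2.t ∧ R q.1 q.2, q.1.sgn * q.2.sgn := by
  have hpair : ∀ y ∈ E, ((if a.t < y.t ∧ R a y then a.sgn * y.sgn else 0) +
      if y.t < a.t ∧ R y a then y.sgn * a.sgn else 0) = if R a y then a.sgn * y.sgn else 0 := by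
    intro y hy
    rcases (ht y hy).lt_or_gt with h | h <;> simp [h, h.not_gt, hR y hy, mul_comm y.sgn]
  simp only [Finset.sum_filter, Finset.sum_product, Finset.sum_insert ha, lt_irrefl, false_and,
    if_false, zero_add, ← Finset.sum_congr rfl hpair, Finset.sum_add_distrib]
  ring

lemma sum_linked_insert_of_outside {H : Arrow → Arrow → Prop} [DecidableRel H]
    (hH : ∀ x y, H x y ↔ H y x) (ha : a.t = p ∧ a.h = c ∨ a.t = c ∧ a.h = p)
    (hp : ∀ y ∈ E, Outside p y) (hc : ¬ IsEndpoint E c) :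
    ∑ q ∈ (insert a E ×ˢ insert a E) with q.1.t < q.2.t ∧ Linked q.1 q.2 ∧ H q.1 q.2,
        q.1.sgn * q.2.sgn =
      ∑ y ∈ E with Linked a y ∧ H a y, a.sgn * y.sgn +
        ∑ q ∈ E ×ˢ E with q.1.t < q.2.t ∧ Linked q.1 q.2 ∧ H q.1 q.2, q.1.sgn * q.2.sgn := by
  refine sum_tail_lt_insert (R := fun x y => Linked x y ∧ H x y) (fun haE => ?_)
    (fun y hy => ?_) fun y hy => ?_
  · have := hp a haE
    unfold Outside at this
    grind
  · have := hp y hy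
    have := ne_of_not_isEndpoint hc hy
    unfold Outside at *
    grind
  · rw [linked_iff_between_of_outside' ha (hp y hy),
      linked_iff_between_of_outside ha (hp y hy) (ne_of_not_isEndpoint hc hy), hH]

lemma v21_insert_of_outside (ha : a.t = p ∧ a.h = c ∨ a.t = c ∧ a.h = p)
    (hp : ∀ y ∈ E, Outside p y) (hc : ¬ IsEndpoint E c) :
    v21 (insert a E) = ∑ y ∈ E with Linked a y ∧ HeadsOut a y, a.sgn * y.sgn + v21 E :=
  sum_linked_insert_of_outside (H := HeadsOut) (fun _ _ => and_comm) ha hp hc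

lemma v22_insert_of_outside (ha : a.t = p ∧ a.h = c ∨ a.t = c ∧ a.h = p)
    (hp : ∀ y ∈ E, Outside p y) (hc : ¬ IsEndpoint E c) :
    v22 (insert a E) = ∑ y ∈ E with Linked a y ∧ HeadsIn a y, a.sgn * y.sgn + v22 E :=
  sum_linked_insert_of_outside (H := HeadsIn) (fun _ _ => and_comm) ha hp hc

lemma sum_linked_headsOut_tail (hp : ∀ y ∈ E, Outside p y) (hc : ¬ IsEndpoint E c) :
    ∑ y ∈ E with Linked ⟨p, c, σ⟩ y ∧ HeadsOut ⟨p, c, σ⟩ y, σ * y.sgn = 0 := by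
  rw [Finset.filter_false_of_mem, Finset.sum_empty]
  rintro y hy ⟨hl, -, hout⟩
  exact hout <| (linked_iff_between_of_outside (Or.inl ⟨rfl, rfl⟩) (hp y hy)
    (ne_of_not_isEndpoint hc hy)).mp hl

lemma sum_linked_headsIn_tail (hp : ∀ y ∈ E, Outside p y) (hc : ¬ IsEndpoint E c) :
    ∑ y ∈ E with Linked ⟨p, c, σ⟩ y ∧ HeadsIn ⟨p, c, σ⟩ y, σ * y.sgn =
      σ * crossingSum E c (Between p c) := by
  rw [crossingSum, Finset.mul_sum, Finset.sum_filter, Finset.sum_filter]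
  refine Finset.sum_congr rfl fun y hy => if_congr ?_ rfl rfl
  rw [linked_iff_between_of_outside (Or.inl ⟨rfl, rfl⟩) (hp y hy) (ne_of_not_isEndpoint hc hy),
    HeadsIn]
  tauto

lemma sum_linked_headsIn_head (hp : ∀ y ∈ E, Outside p y) :
    ∑ y ∈ E with Linked ⟨c, p, σ⟩ y ∧ HeadsIn ⟨c, p, σ⟩ y, σ * y.sgn = 0 := by
  rw [Finset.filter_false_of_mem, Finset.sum_empty]
  rintro y hy ⟨-, -, hin⟩
  exact not_between_of_outside (hp y hy) hin

lemma sum_linked_headsOut_head (hp : ∀ y ∈ E, Outside p y) (hc : ¬ IsEndpoint E c) :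
    ∑ y ∈ E with Linked ⟨c, p, σ⟩ y ∧ HeadsOut ⟨c, p, σ⟩ y, σ * y.sgn =
      σ * crossingSum E c (¬ Between p c ·) := by
  rw [crossingSum, Finset.mul_sum, Finset.sum_filter, Finset.sum_filter]
  refine Finset.sum_congr rfl fun y hy => ?_
  have hiff : Linked ⟨c, p, σ⟩ y ∧ HeadsOut ⟨c, p, σ⟩ y ↔
      Between y.t y.h c ∧ ¬ Between p c y.h := by
    rw [linked_iff_between_of_outside (Or.inr ⟨rfl, rfl⟩) (hp y hy)
      (ne_of_not_isEndpoint hc hy), HeadsOut, between_comm (a := c)]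
    have := not_between_of_outside (hp y hy)
    tauto
  -- `convert` reconciles the two `Decidable` instances of the condition
  convert if_congr hiff rfl rfl

lemma index_insert_of_outside (ha : a.t = p ∧ a.h = c ∨ a.t = c ∧ a.h = p)
    (hp : ∀ y ∈ E, Outside p y) (hc : ¬ IsEndpoint E c) :
    index (insert a E) a =
      a.sgn * crossingSum E c (Between p c) - a.sgn * crossingSum E c (¬ Between p c ·) := by
  rw [index, Finset.filter_insert, if_neg fun h => h.1 rfl, crossingSum, crossingSum,
    Finset.mul_sum, Finset.mul_sum, Finset.sum_filter, Finset.sum_filter, Finset.sum_filter,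
    ← Finset.sum_sub_distrib]
  refine Finset.sum_congr rfl fun y hy => ?_
  rw [delta, between_eq_of_endpoints ha,
    linked_iff_between_of_outside ha (hp y hy) (ne_of_not_isEndpoint hc hy)]
  by_cases hy : Between y.t y.h c <;> by_cases hh : Between p c y.h <;> simp [hy, hh]

end Anchored

section Rotation

variable {E : Finset Arrow} {e c M : ℝ} (σ : ℤ)

lemma outside_of_forall_isEndpoint_lt {p : ℝ} (h : ∀ q, IsEndpoint E q → p < q) :
    ∀ y ∈ E, Outside p y := fun y hy =>
  Or.inl ⟨h _ ⟨y, hy, Or.inl rfl⟩, h _ ⟨y, hy, Or.inr rfl⟩⟩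

lemma outside_of_forall_isEndpoint_gt {p : ℝ} (h : ∀ q, IsEndpoint E q → q < p) :
    ∀ y ∈ E, Outside p y := fun y hy =>
  Or.inr ⟨h _ ⟨y, hy, Or.inl rfl⟩, h _ ⟨y, hy, Or.inr rfl⟩⟩

lemma not_between_iff_between_of_isEndpoint (he : ∀ q, IsEndpoint E q → e < q)
    (hM : ∀ q, IsEndpoint E q → q < M) (hc : ¬ IsEndpoint E c) :
    ∀ y ∈ E, ¬ Between e c y.h ↔ Between M c y.h := fun y hy =>
  not_between_iff_between_of_mem_Ioo ⟨he _ ⟨y, hy, Or.inr rfl⟩, hM _ ⟨y, hy, Or.inr rfl⟩⟩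
    (ne_of_not_isEndpoint hc hy).2

theorem v21_v22_rotate_tail (he : ∀ q, IsEndpoint E q → e < q)
    (hM : ∀ q, IsEndpoint E q → q < M) (hc : ¬ IsEndpoint E c)
    (hidx : index (insert ⟨e, c, σ⟩ E) ⟨e, c, σ⟩ = 0) :
    v21 (insert ⟨M, c, σ⟩ E) = v21 (insert ⟨e, c, σ⟩ E) ∧
      v22 (insert ⟨M, c, σ⟩ E) = v22 (insert ⟨e, c, σ⟩ E) := by
  have hlow := outside_of_forall_isEndpoint_lt he
  have hhigh := outside_of_forall_isEndpoint_gt hM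
  rw [index_insert_of_outside (Or.inl ⟨rfl, rfl⟩) hlow hc, sub_eq_zero,
    crossingSum_congr (P := (¬ Between e c ·)) (not_between_iff_between_of_isEndpoint he hM hc)]
    at hidx
  constructor
  · rw [v21_insert_of_outside (Or.inl ⟨rfl, rfl⟩) hhigh hc,
      v21_insert_of_outside (Or.inl ⟨rfl, rfl⟩) hlow hc, sum_linked_headsOut_tail hhigh hc,
      sum_linked_headsOut_tail hlow hc]
  · rw [v22_insert_of_outside (Or.inl ⟨rfl, rfl⟩) hhigh hc,
      v22_insert_of_outside (Or.inl ⟨rfl, rfl⟩) hlow hc, sum_linked_headsIn_tail hhigh hc,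
      sum_linked_headsIn_tail hlow hc, hidx]

theorem v21_v22_rotate_head (he : ∀ q, IsEndpoint E q → e < q)
    (hM : ∀ q, IsEndpoint E q → q < M) (hc : ¬ IsEndpoint E c)
    (hidx : index (insert ⟨c, e, σ⟩ E) ⟨c, e, σ⟩ = 0) :
    v21 (insert ⟨c, M, σ⟩ E) = v21 (insert ⟨c, e, σ⟩ E) ∧
      v22 (insert ⟨c, M, σ⟩ E) = v22 (insert ⟨c, e, σ⟩ E) := by
  have hlow := outside_of_forall_isEndpoint_lt he
  have hhigh := outside_of_forall_isEndpoint_gt hM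
  have hswap : crossingSum E c (¬ Between M c ·) = crossingSum E c (Between e c) :=
    crossingSum_congr fun y hy =>
      not_iff_comm.mp (not_between_iff_between_of_isEndpoint he hM hc y hy)
  rw [index_insert_of_outside (Or.inr ⟨rfl, rfl⟩) hlow hc, sub_eq_zero, ← hswap] at hidx
  constructor
  · rw [v21_insert_of_outside (Or.inr ⟨rfl, rfl⟩) hhigh hc,
      v21_insert_of_outside (Or.inr ⟨rfl, rfl⟩) hlow hc, sum_linked_headsOut_head hhigh hc,
      sum_linked_headsOut_head hlow hc, hidx]
  · rw [v22_insert_of_outside (Or.inr ⟨rfl, rfl⟩) hhigh hc,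
      v22_insert_of_outside (Or.inr ⟨rfl, rfl⟩) hlow hc, sum_linked_headsIn_head hhigh,
      sum_linked_headsIn_head hlow]

end Rotation

section Erase

variable {D : Finset Arrow} {z : Arrow} {q : ℝ}

lemma IsEndpoint.of_erase (hq : IsEndpoint (D.erase z) q) : IsEndpoint D q :=
  let ⟨y, hy, hqy⟩ := hq
  ⟨y, Finset.mem_of_mem_erase hy, hqy⟩

lemma IsEndpoint.ne_of_erase (hD : IsGaussDiagram D) (hz : z ∈ D)
    (hq : IsEndpoint (D.erase z) q) : q ≠ z.t ∧ q ≠ z.h := by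
  obtain ⟨y, hy, rfl | rfl⟩ := hq <;>
  · have := hD.2.2 y (Finset.mem_of_mem_erase hy) z hz (Finset.ne_of_mem_erase hy)
    tauto

end Erase

/-- the order-two invariants `v21` and `v22` are unchanged when a
zero-index diagram is rotated (the smallest endpoint is moved past the right
end, keeping its role as head or tail). -/
theorem stmt6 (D : Finset Arrow) (hD : IsGaussDiagram D)
    (hzero : ∀ x ∈ D, index D x = 0)
    (z : Arrow) (hz : z ∈ D)
    (e : ℝ) (he : e = z.t ∨ e = z.h) (hmin : ∀ r, IsEndpoint D r → e ≤ r)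
    (M : ℝ) (hM : ∀ r, IsEndpoint D r → r < M) :
    let z' : Arrow := if e = z.t then ⟨M, z.h, z.sgn⟩ else ⟨z.t, M, z.sgn⟩
    let D' : Finset Arrow := insert z' (D.erase z)
    v21 D' = v21 D ∧ v22 D' = v22 D := by
  intro z' D'
  have hlow : ∀ q, IsEndpoint (D.erase z) q → e < q := fun q hq =>
    (hmin q hq.of_erase).lt_of_ne <| by
      rcases he with rfl | rfl
      exacts [(hq.ne_of_erase hD hz).1.symm, (hq.ne_of_erase hD hz).2.symm]
  have hhigh : ∀ q, IsEndpoint (D.erase z) q → q < M := fun q hq => hM q hq.of_erase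
  have hidx := hzero z hz
  rw [← Finset.insert_erase hz] at hidx ⊢
  obtain ⟨t, h, σ⟩ := z
  rcases he with rfl | rfl
  · simp only [z', D', if_pos rfl]
    exact v21_v22_rotate_tail σ hlow hhigh (fun hq => (hq.ne_of_erase hD hz).2 rfl) hidx
  · simp only [z', D', if_neg (hD.2.1 _ hz).symm]
    exact v21_v22_rotate_head σ hlow hhigh (fun hq => (hq.ne_of_erase hD hz).1 rfl) hidx

end Gauss
end
end

section
/- For every Gauss diagram D on the Wilson line with zero index, v21(D) = v22(D); that is, the two order-two Gauss diagram invariants of long virtual knots coincide on all zero-index diagrams. -/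
/-
Summing the index over all arrows counts every linked pair `{x, y}` twice, with weight
`(δ(x,y) + δ(y,x)) σ(x) σ(y)`. This weight is `2 σ(x) σ(y)` on heads-in pairs, `-2 σ(x) σ(y)` on
heads-out pairs and `0` on the remaining ones, so `∑ₓ I_D(x) = 2 (v22 D - v21 D)`, which vanishes
when every index does.
-/

noncomputable section

namespace Gauss

attribute [local instance] Classical.propDecidable

open Finset

theorem between_iff_mul_neg {a b p : ℝ} : Between a b p ↔ (p - a) * (p - b) < 0 := by
  rw [mul_neg_iff, sub_pos, sub_neg, sub_pos, sub_neg, Between]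
  tauto

theorem xor_neg_iff_mul_neg {α : Type*} [Ring α] [LinearOrder α] [IsStrictOrderedRing α]
    {a b : α} (ha : a ≠ 0) (hb : b ≠ 0) : Xor (a < 0) (b < 0) ↔ a * b < 0 := by
  rw [mul_neg_iff, ← ha.symm.le_iff_lt, ← hb.symm.le_iff_lt, ← not_lt, ← not_lt (a := b), Xor]
  tauto

-- Both sides say that `(a - c) * (a - d) * (b - c) * (b - d) < 0`.
theorem xor_between_comm {a b c d : ℝ} (hac : a ≠ c) (had : a ≠ d) (hbc : b ≠ c)
    (hbd : b ≠ d) :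
    Xor (Between a b c) (Between a b d) ↔ Xor (Between c d a) (Between c d b) := by
  have hne {u v : ℝ} (h : u ≠ v) : u - v ≠ 0 := sub_ne_zero.2 h
  simp only [between_iff_mul_neg]
  rw [xor_neg_iff_mul_neg (mul_ne_zero (hne hac.symm) (hne hbc.symm))
      (mul_ne_zero (hne had.symm) (hne hbd.symm)),
    xor_neg_iff_mul_neg (mul_ne_zero (hne hac) (hne had)) (mul_ne_zero (hne hbc) (hne hbd))]
  ring_nf

theorem IsGaussDiagram.linked_comm_s7 {D : Finset Arrow} (hD : IsGaussDiagram D) {x y : Arrow}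
    (hx : x ∈ D) (hy : y ∈ D) : Linked x y ↔ Linked y x := by
  by_cases hxy : x = y
  · rw [hxy]
  obtain ⟨htt, hth, hht, hhh⟩ := hD.2.2 x hx y hy hxy
  exact and_congr ne_comm (xor_between_comm htt hth hht hhh)

theorem delta_add_delta (x y : Arrow) :
    delta x y + delta y x =
      2 * (if HeadsIn x y then 1 else 0) - 2 * (if HeadsOut x y then 1 else 0) := by
  unfold delta HeadsIn HeadsOut
  split_ifs <;> tauto

theorem sum_product_swap {α M : Type*} [AddCommMonoid M] (s : Finset α) (f : α × α → M) :
    ∑ p ∈ s ×ˢ s, f p.swap = ∑ p ∈ s ×ˢ s, f p := by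
  rw [sum_product, sum_product_right]
  rfl

theorem sum_filter_symm_eq_sum_filter_lt {α β M : Type*} [LinearOrder β] [AddCommMonoid M]
    (s : Finset α) (k : α → β) (R : α → α → Prop)
    (hR : ∀ x ∈ s, ∀ y ∈ s, R x y → R y x) (hk : ∀ x ∈ s, ∀ y ∈ s, R x y → k x ≠ k y)
    (f : α × α → M) :
    ∑ p ∈ (s ×ˢ s).filter (fun p => R p.1 p.2), f p =
      ∑ p ∈ (s ×ˢ s).filter (fun p => k p.1 < k p.2 ∧ R p.1 p.2), (f p + f p.swap) := by
  have hsplit (p : α × α) (hp : p ∈ s ×ˢ s) : (if R p.1 p.2 then f p else 0) =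
      (if k p.1 < k p.2 ∧ R p.1 p.2 then f p else 0) +
        (if k p.2 < k p.1 ∧ R p.2 p.1 then f p else 0) := by
    rw [mem_product] at hp
    by_cases hRp : R p.1 p.2
    · rcases (hk _ hp.1 _ hp.2 hRp).lt_or_gt with hlt | hlt
      · simp [hRp, hlt, hlt.not_gt]
      · simp [hRp, hlt, hlt.not_gt, hR _ hp.1 _ hp.2 hRp]
    · have : ¬ R p.2 p.1 := fun h => hRp (hR _ hp.2 _ hp.1 h)
      simp [hRp, this]
  have hswap := sum_product_swap s (fun q => if k q.1 < k q.2 ∧ R q.1 q.2 then f q.swap else 0)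
  simp only [Prod.fst_swap, Prod.snd_swap, Prod.swap_swap] at hswap
  rw [sum_filter, sum_filter, sum_congr rfl hsplit, sum_add_distrib, hswap, ← sum_add_distrib]
  simp only [← ite_add_zero]

theorem sum_index_eq_sum_linked (D : Finset Arrow) :
    ∑ x ∈ D, index D x =
      ∑ p ∈ (D ×ˢ D).filter (fun p => Linked p.1 p.2), delta p.1 p.2 * p.1.sgn * p.2.sgn := by
  simp only [index, sum_filter, sum_product]

theorem sum_filter_tail_lt_linked_and {D : Finset Arrow} (Q : Arrow → Arrow → Prop) :
    ∑ p ∈ (D ×ˢ D).filter (fun p => p.1.t < p.2.t ∧ Linked p.1 p.2 ∧ Q p.1 p.2),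
        p.1.sgn * p.2.sgn =
      ∑ p ∈ (D ×ˢ D).filter (fun p => p.1.t < p.2.t ∧ Linked p.1 p.2),
        if Q p.1 p.2 then p.1.sgn * p.2.sgn else 0 := by
  rw [← sum_filter, filter_filter]
  simp only [and_assoc]

theorem IsGaussDiagram.sum_index_eq {D : Finset Arrow} (hD : IsGaussDiagram D) :
    ∑ x ∈ D, index D x = 2 * (v22 D - v21 D) := by
  have hlinked_tail (x) (hx : x ∈ D) (y) (hy : y ∈ D) (hxy : Linked x y) : x.t ≠ y.t :=
    (hD.2.2 x hx y hy hxy.1).1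
  rw [sum_index_eq_sum_linked, sum_filter_symm_eq_sum_filter_lt D Arrow.t _
      (fun x hx y hy => (hD.linked_comm_s7 hx hy).1) hlinked_tail,
    v22, v21, sum_filter_tail_lt_linked_and, sum_filter_tail_lt_linked_and, ← sum_sub_distrib,
    mul_sum]
  refine sum_congr rfl fun p _ => ?_
  rw [Prod.fst_swap, Prod.snd_swap, ← mul_boole, ← mul_boole (HeadsOut _ _)]
  linear_combination p.1.sgn * p.2.sgn * delta_add_delta p.1 p.2

/-- the two order-two Gauss diagram invariants coincide on all
zero-index diagrams. -/
theorem stmt7 (D : Finset Arrow) (hD : IsGaussDiagram D)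
    (hzero : ∀ x ∈ D, index D x = 0) : v21 D = v22 D := by
  have h := hD.sum_index_eq
  rw [sum_eq_zero hzero] at h
  linarith

end Gauss
end
end
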